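/- Let q be a nonzero complex number, δ a purely imaginary complex number with Im δ > 0, and ζ a complex number with either ζ = δ/2 or ζ = (1+δ)/2. Equip ℂ² with the hermitian form ⟨u,v⟩ = q·u₁·conj(v₂) + conj(q)·u₂·conj(v₁) and set B(u,v) = ⟨u,v⟩ + conj(⟨u,v⟩) (= 2·Re⟨u,v⟩). Define e₁ = (1,0), e₂ = (0, ζ/(δ·conj(q))), e₃ = (−ζ, 0), e₄ = (0, 1/(δ·conj(q))). Then B(eᵢ,eᵢ) = 0 for i = 1,2,3,4; B(e₁,e₂) = 1 and B(e₃,e₄) = 1; and B(eᵢ,eⱼ) = 0 for all other pairs {i,j}, i.e. B(e₁,e₃) = B(e₁,e₄) = B(e₂,e₃) = B(e₂,e₄) = 0. -/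

import Mathlib

open Complex

/-- The hermitian form `⟨u,v⟩ = q·u₁·conj(v₂) + conj(q)·u₂·conj(v₁)` on `ℂ²`. -/
def hermForm (q : ℂ) (u v : ℂ × ℂ) : ℂ :=
  q * u.1 * (starRingEnd ℂ) v.2 + (starRingEnd ℂ) q * u.2 * (starRingEnd ℂ) v.1

/-- The trace bilinear form `B(u,v) = ⟨u,v⟩ + conj(⟨u,v⟩) = 2·Re⟨u,v⟩`. -/
def traceForm (q : ℂ) (u v : ℂ × ℂ) : ℂ :=
  hermForm q u v + (starRingEnd ℂ) (hermForm q u v)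

/-!
Both coordinate lines `ℓ = ℂ × 0` and `ℓ' = 0 × ℂ` are isotropic for `⟨·,·⟩`, hence for `B`, so
only the cross pairings matter. Since `conj δ = -δ`, the normalisation by `δ · conj q` turns
`B((a,0), (0, μ/(δ·conj q)))` into `(conj a · μ - a · conj μ) / δ`, and the basis relations reduce
to `ζ - conj ζ = δ`, which holds because `Im ζ = Im δ / 2`.
-/

lemma hermForm_conj_symm (q : ℂ) (u v : ℂ × ℂ) :
    starRingEnd ℂ (hermForm q v u) = hermForm q u v := by
  simp only [hermForm, map_add, map_mul, conj_conj]
  ring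

lemma traceForm_comm (q : ℂ) (u v : ℂ × ℂ) : traceForm q u v = traceForm q v u := by
  rw [traceForm, traceForm, ← hermForm_conj_symm q v u, conj_conj, add_comm]

lemma traceForm_fst_fst (q a b : ℂ) : traceForm q (a, 0) (b, 0) = 0 := by
  simp [traceForm, hermForm]

lemma traceForm_snd_snd (q a b : ℂ) : traceForm q (0, a) (0, b) = 0 := by
  simp [traceForm, hermForm]

lemma traceForm_fst_snd_div {q δ : ℂ} (hq : q ≠ 0) (hδ : δ ≠ 0)
    (hδconj : starRingEnd ℂ δ = -δ) (a μ : ℂ) :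
    traceForm q (a, 0) (0, μ / (δ * starRingEnd ℂ q)) =
      (starRingEnd ℂ a * μ - a * starRingEnd ℂ μ) / δ := by
  have hq' : starRingEnd ℂ q ≠ 0 := (map_ne_zero _).mpr hq
  simp only [traceForm, hermForm, mul_zero, map_zero, add_zero, map_mul, map_div₀, conj_conj,
    map_neg, hδconj]
  field_simp
  ring

lemma conj_eq_neg_of_re_eq_zero {δ : ℂ} (hδ : δ.re = 0) : starRingEnd ℂ δ = -δ := by
  apply Complex.ext <;> simp [hδ]

lemma sub_conj_eq_of_two_mul_im_eq {ζ δ : ℂ} (hδ : δ.re = 0) (hζ : 2 * ζ.im = δ.im) :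
    ζ - starRingEnd ℂ ζ = δ := by
  apply Complex.ext
  · simp [hδ]
  · simp only [sub_im, conj_im, sub_neg_eq_add]
    linarith

/-- The vectors `e₁ = (1,0)`, `e₂ = (0, ζ/(δ·conj q))`, `e₃ = (−ζ, 0)`,
`e₄ = (0, 1/(δ·conj q))` split `(ℂ², B)` into two hyperbolic planes:
all are isotropic, `B(e₁,e₂) = B(e₃,e₄) = 1`, and all other pairings vanish. -/
theorem hyperbolic_basis (q δ ζ : ℂ) (hq : q ≠ 0) (hδre : δ.re = 0) (hδim : 0 < δ.im)
    (hζ : ζ = δ / 2 ∨ ζ = (1 + δ) / 2) :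
    let e₁ : ℂ × ℂ := (1, 0)
    let e₂ : ℂ × ℂ := (0, ζ / (δ * (starRingEnd ℂ) q))
    let e₃ : ℂ × ℂ := (-ζ, 0)
    let e₄ : ℂ × ℂ := (0, 1 / (δ * (starRingEnd ℂ) q))
    traceForm q e₁ e₁ = 0 ∧ traceForm q e₂ e₂ = 0 ∧
    traceForm q e₃ e₃ = 0 ∧ traceForm q e₄ e₄ = 0 ∧
    traceForm q e₁ e₂ = 1 ∧ traceForm q e₃ e₄ = 1 ∧
    traceForm q e₁ e₃ = 0 ∧ traceForm q e₁ e₄ = 0 ∧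
    traceForm q e₂ e₃ = 0 ∧ traceForm q e₂ e₄ = 0 := by
  have hδ : δ ≠ 0 := fun h => by simp [h] at hδim
  have hζδ : ζ - starRingEnd ℂ ζ = δ := by
    refine sub_conj_eq_of_two_mul_im_eq hδre ?_
    rcases hζ with rfl | rfl <;> simp <;> ring
  have cross := traceForm_fst_snd_div hq hδ (conj_eq_neg_of_re_eq_zero hδre)
  intro e₁ e₂ e₃ e₄
  refine ⟨traceForm_fst_fst .., traceForm_snd_snd .., traceForm_fst_fst .., traceForm_snd_snd ..,
    ?_, ?_, traceForm_fst_fst .., ?_, ?_, traceForm_snd_snd ..⟩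
  · rw [cross, map_one, one_mul, one_mul, hζδ, div_self hδ]
  · rw [cross, map_one, mul_one, mul_one, map_neg, neg_sub_neg, hζδ, div_self hδ]
  · rw [cross, map_one, mul_one, sub_self, zero_div]
  · rw [traceForm_comm, cross, map_neg, neg_mul, neg_mul, mul_comm, sub_neg_eq_add,
      neg_add_cancel, zero_div]
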